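/- arXiv:2205.04111 — 3 statements merged into one kernel-verified Lean document; each statement's English description precedes it below -/
import Mathlib

section
/- For a Galois connection (l, r) on a complete lattice Q, the condition l ∘ r = r ∘ l holds if and only if the images of l and r in Q coincide. -/
/-!
The hypothesis makes `l` and `r` an antitone Galois connection, i.e. a Galois connection between
`Q` and its order dual. Hence `r ∘ l` and `l ∘ r` are closure operators on `Q`, and since
`r ∘ l ∘ r = r` and `l ∘ r ∘ l = l` their images are the images of `r` and `l`. A closure operator
is determined by its image (its set of closed elements), so `l ∘ r = r ∘ l` exactly when
`range l = range r`.
-/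

theorem ClosureOperator.coe_eq_coe_iff_range_eq {α : Type*} [PartialOrder α]
    {c₁ c₂ : ClosureOperator α} : ⇑c₁ = ⇑c₂ ↔ Set.range c₁ = Set.range c₂ := by
  refine ⟨fun h => h ▸ rfl, fun h => congrArg _ (c₁.ext_isClosed c₂ fun x => ?_)⟩
  rw [← Set.mem_ofPred_eq (p := c₁.IsClosed), ← Set.mem_ofPred_eq (p := c₂.IsClosed),
    c₁.setOfPred_isClosed_eq_range_closure, c₂.setOfPred_isClosed_eq_range_closure, h]

theorem GaloisConnection.range_u_comp_l {α β : Type*} [PartialOrder α] [Preorder β] {l : α → β}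
    {u : β → α} (gc : GaloisConnection l u) : Set.range (u ∘ l) = Set.range u :=
  (Set.range_comp_subset_range l u).antisymm <| by
    rintro _ ⟨b, rfl⟩
    exact ⟨u b, gc.u_l_u_eq_u b⟩

section

variable {α : Type*} [PartialOrder α] {l r : α → α}

theorem galoisConnection_toDual_comp_of_le_iff (h : ∀ x y, y ≤ l x ↔ x ≤ r y) :
    GaloisConnection (OrderDual.toDual ∘ l) (r ∘ OrderDual.ofDual) :=
  fun x y => h x (OrderDual.ofDual y)

theorem coe_closureOperator_of_le_iff (h : ∀ x y, y ≤ l x ↔ x ≤ r y) :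
    ⇑(galoisConnection_toDual_comp_of_le_iff h).closureOperator = r ∘ l :=
  rfl

theorem range_comp_eq_range_of_le_iff (h : ∀ x y, y ≤ l x ↔ x ≤ r y) :
    Set.range (r ∘ l) = Set.range r :=
  (galoisConnection_toDual_comp_of_le_iff h).range_u_comp_l

end

theorem stmt9 {Q : Type*} [CompleteLattice Q]
    (l r : Q → Q)
    (hgc : ∀ x y, y ≤ l x ↔ x ≤ r y) :
    l ∘ r = r ∘ l ↔ Set.range l = Set.range r := by
  have hgc_symm : ∀ x y, y ≤ r x ↔ x ≤ l y := fun x y => (hgc y x).symm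
  rw [← range_comp_eq_range_of_le_iff hgc_symm, ← range_comp_eq_range_of_le_iff hgc,
    ← coe_closureOperator_of_le_iff hgc_symm, ← coe_closureOperator_of_le_iff hgc]
  exact ClosureOperator.coe_eq_coe_iff_range_eq
end

section
/- Every Frobenius quantale (Q, ∗, ⊥(-), (-)⊥) is isomorphic to a phase quantale: defining x R y ⟺ x ≤ ⊥y on the semigroup (Q, ∗), the relation R is associative, the induced Galois connection (l, r) on P(Q) is a Serre Galois connection with nucleus j(X) = ↓(⋁X), and the map x ↦ ↓x is a quantale isomorphism from Q onto the quotient quantale (P(Q)_j, •_j) carrying negations to the restrictions of l and r. -/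
/-!
Since `⊥(-)` and `(-)⊥` are mutually inverse antitone maps, `a ≤ ⊥b ↔ b ≤ a⊥`. Hence both polars
of a set `X` for `R` are principal downsets, `l X = ↓⊥(⋁X)` and `r X = ↓(⋁X)⊥`, so `l ∘ r` and
`r ∘ l` both send `X` to `↓(⋁X)`, whose fixed points are exactly the principal downsets.
Associativity of `R` is the Frobenius identity `x \ ⊥y = x⊥ / y` read through the two
residuations, and `⋁(↓x • ↓y) = x ∗ y` because `∗` is monotone.
-/

open Set

theorem image2_subset_upperPolar_iff {S : Type*} {R : S → S → Prop} {mul : S → S → S}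
    (hR : ∀ x y z, R (mul x y) z ↔ R x (mul y z)) (X Y Z : Set S) :
    image2 mul X Y ⊆ upperPolar R Z ↔ image2 mul Z X ⊆ lowerPolar R Y := by
  simp only [image2_subset_iff, mem_upperPolar_iff, mem_lowerPolar_iff, hR]
  exact ⟨fun h z hz x hx y hy => h x hx y hy hz, fun h x hx y hy z hz => h z hz x hx hy⟩

section Negations

variable {Q : Type*} {lneg rneg : Q → Q}

theorem le_lneg_iff_le_rneg [Preorder Q] (hlanti : Antitone lneg) (hranti : Antitone rneg)
    (hinv1 : ∀ x, lneg (rneg x) = x) (hinv2 : ∀ x, rneg (lneg x) = x) {a b : Q} :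
    a ≤ lneg b ↔ b ≤ rneg a :=
  ⟨fun h => by simpa only [hinv2] using hranti h, fun h => by simpa only [hinv1] using hlanti h⟩

theorem lowerPolar_le_lneg_eq_Iic [CompleteLattice Q]
    (hneg : ∀ a b : Q, a ≤ lneg b ↔ b ≤ rneg a) (Y : Set Q) :
    lowerPolar (fun a b => a ≤ lneg b) Y = Iic (lneg (sSup Y)) := by
  ext u
  simp only [mem_lowerPolar_iff, mem_Iic, hneg u, sSup_le_iff]

theorem upperPolar_le_lneg_eq_Iic [CompleteLattice Q]
    (hneg : ∀ a b : Q, a ≤ lneg b ↔ b ≤ rneg a) (X : Set Q) :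
    upperPolar (fun a b => a ≤ lneg b) X = Iic (rneg (sSup X)) := by
  ext u
  simp only [mem_upperPolar_iff, mem_Iic, ← hneg, sSup_le_iff]

theorem mul_le_lneg_iff_le_lneg_mul [LE Q] {mul ldiv rdiv : Q → Q → Q}
    (hldiv : ∀ x y z : Q, mul x y ≤ z ↔ y ≤ ldiv x z)
    (hrdiv : ∀ x y z : Q, mul x y ≤ z ↔ x ≤ rdiv z y)
    (hserre : ∀ x y, ldiv x (lneg y) = rdiv (rneg x) y)
    (hneg : ∀ a b : Q, a ≤ lneg b ↔ b ≤ rneg a) (x y z : Q) :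
    mul x y ≤ lneg z ↔ x ≤ lneg (mul y z) := by
  rw [hldiv, hserre, ← hrdiv, hneg]

end Negations

theorem stmt11_general {Q : Type*} [CompleteLattice Q]
    (mul : Q → Q → Q)
    (ldiv rdiv : Q → Q → Q)
    (hldiv : ∀ x y z : Q, mul x y ≤ z ↔ y ≤ ldiv x z)
    (hrdiv : ∀ x y z : Q, mul x y ≤ z ↔ x ≤ rdiv z y)
    (lneg rneg : Q → Q)
    (hlanti : Antitone lneg) (hranti : Antitone rneg)
    (hinv1 : ∀ x, lneg (rneg x) = x) (hinv2 : ∀ x, rneg (lneg x) = x)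
    (hserre : ∀ x y, ldiv x (lneg y) = rdiv (rneg x) y)
    -- the Galois connection on P(Q) induced by the relation R x y ⟺ x ≤ ⊥y:
    (l r : Set Q → Set Q)
    (hl : ∀ Y, l Y = {u | ∀ y ∈ Y, u ≤ lneg y})
    (hr : ∀ X, r X = {u | ∀ x ∈ X, x ≤ lneg u})
    (j : Set Q → Set Q) (hj : j = l ∘ r) :
    -- R is associative:
    (∀ x y z : Q, mul x y ≤ lneg z ↔ x ≤ lneg (mul y z)) ∧
    -- (l, r) is a Galois connection on P(Q):
    (∀ X Y : Set Q, Y ⊆ l X ↔ X ⊆ r Y) ∧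
    -- with l ∘ r = r ∘ l:
    (∀ X : Set Q, l (r X) = r (l X)) ∧
    -- satisfying the shift relation for •:
    (∀ X Y Z : Set Q,
        Set.image2 mul X Y ⊆ r Z ↔ Set.image2 mul Z X ⊆ l Y) ∧
    -- the induced nucleus is j(X) = ↓(⋁ X):
    (∀ X : Set Q, j X = Set.Iic (sSup X)) ∧
    -- x ↦ ↓x is injective and onto the j-closed sets:
    Function.Injective (fun x : Q => Set.Iic x) ∧
    (∀ X : Set Q, j X = X → ∃ x : Q, X = Set.Iic x) ∧
    -- it is a quantale homomorphism onto (P(Q)_j, •_j):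
    (∀ x y : Q,
        j (Set.image2 mul (Set.Iic x) (Set.Iic y)) = Set.Iic (mul x y)) ∧
    -- and it carries the negations to the restrictions of l and r:
    (∀ x : Q, l (Set.Iic x) = Set.Iic (lneg x)) ∧
    (∀ x : Q, r (Set.Iic x) = Set.Iic (rneg x)) := by
  have hneg (a b : Q) : a ≤ lneg b ↔ b ≤ rneg a := le_lneg_iff_le_rneg hlanti hranti hinv1 hinv2
  have hR := mul_le_lneg_iff_le_lneg_mul hldiv hrdiv hserre hneg
  have hl' : l = lowerPolar (fun a b => a ≤ lneg b) := funext hl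
  have hr' : r = upperPolar (fun a b => a ≤ lneg b) := funext hr
  have hlX (X : Set Q) : l X = Iic (lneg (sSup X)) := by rw [hl', lowerPolar_le_lneg_eq_Iic hneg]
  have hrX (X : Set Q) : r X = Iic (rneg (sSup X)) := by rw [hr', upperPolar_le_lneg_eq_Iic hneg]
  have hlIic (x : Q) : l (Iic x) = Iic (lneg x) := by rw [hlX, csSup_Iic]
  have hrIic (x : Q) : r (Iic x) = Iic (rneg x) := by rw [hrX, csSup_Iic]
  have hlr (X : Set Q) : l (r X) = Iic (sSup X) := by rw [hrX, hlIic, hinv1]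
  have hrl (X : Set Q) : r (l X) = Iic (sSup X) := by rw [hlX, hrIic, hinv2]
  have hjX (X : Set Q) : j X = Iic (sSup X) := hj ▸ hlr X
  have hmul (x y : Q) : sSup (image2 mul (Iic x) (Iic y)) = mul x y :=
    (isGreatest_Iic.image2 (fun b => GaloisConnection.monotone_l (hrdiv · b))
      (fun a => GaloisConnection.monotone_l (hldiv a)) isGreatest_Iic).csSup_eq
  refine ⟨hR, hl' ▸ hr' ▸ fun X Y => subset_upperPolar_iff_subset_lowerPolar.symm,
    fun X => (hlr X).trans (hrl X).symm, hl' ▸ hr' ▸ image2_subset_upperPolar_iff hR, hjX,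
    Iic_injective, fun X hX => ⟨sSup X, hX.symm.trans (hjX X)⟩, fun x y => by rw [hjX, hmul],
    hlIic, hrIic⟩

theorem stmt11 {Q : Type*} [CompleteLattice Q]
    (mul : Q → Q → Q)
    (hassoc : ∀ x y z, mul (mul x y) z = mul x (mul y z))
    (ldiv rdiv : Q → Q → Q)
    (hldiv : ∀ x y z : Q, mul x y ≤ z ↔ y ≤ ldiv x z)
    (hrdiv : ∀ x y z : Q, mul x y ≤ z ↔ x ≤ rdiv z y)
    (lneg rneg : Q → Q)
    (hlanti : Antitone lneg) (hranti : Antitone rneg)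
    (hinv1 : ∀ x, lneg (rneg x) = x) (hinv2 : ∀ x, rneg (lneg x) = x)
    (hserre : ∀ x y, ldiv x (lneg y) = rdiv (rneg x) y)
    -- the Galois connection on P(Q) induced by the relation R x y ⟺ x ≤ ⊥y:
    (l r : Set Q → Set Q)
    (hl : ∀ Y, l Y = {u | ∀ y ∈ Y, u ≤ lneg y})
    (hr : ∀ X, r X = {u | ∀ x ∈ X, x ≤ lneg u})
    (j : Set Q → Set Q) (hj : j = l ∘ r) :
    -- R is associative:
    (∀ x y z : Q, mul x y ≤ lneg z ↔ x ≤ lneg (mul y z)) ∧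
    -- (l, r) is a Galois connection on P(Q):
    (∀ X Y : Set Q, Y ⊆ l X ↔ X ⊆ r Y) ∧
    -- with l ∘ r = r ∘ l:
    (∀ X : Set Q, l (r X) = r (l X)) ∧
    -- satisfying the shift relation for •:
    (∀ X Y Z : Set Q,
        Set.image2 mul X Y ⊆ r Z ↔ Set.image2 mul Z X ⊆ l Y) ∧
    -- the induced nucleus is j(X) = ↓(⋁ X):
    (∀ X : Set Q, j X = Set.Iic (sSup X)) ∧
    -- x ↦ ↓x is injective and onto the j-closed sets:
    Function.Injective (fun x : Q => Set.Iic x) ∧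
    (∀ X : Set Q, j X = X → ∃ x : Q, X = Set.Iic x) ∧
    -- it is a quantale homomorphism onto (P(Q)_j, •_j):
    (∀ x y : Q,
        j (Set.image2 mul (Set.Iic x) (Set.Iic y)) = Set.Iic (mul x y)) ∧
    -- and it carries the negations to the restrictions of l and r:
    (∀ x : Q, l (Set.Iic x) = Set.Iic (lneg x)) ∧
    (∀ x : Q, r (Set.Iic x) = Set.Iic (rneg x)) :=
  stmt11_general mul ldiv rdiv hldiv hrdiv lneg rneg hlanti hranti hinv1 hinv2 hserre l r hl hr j hj
end

section
/- On the complete lattice of all endofunctions of a complete lattice L ordered pointwise, the Raney transform (−)^∧ is right adjoint to the Raney transform (−)^∨: for all f, g : L → L, f^∨ ≤ g (pointwise) if and only if f ≤ g^∧ (pointwise). -/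
/-- The Raney transform f^∨. -/
def raneV {L : Type*} [CompleteLattice L] (f : L → L) (x : L) : L :=
  sSup (f '' {t | ¬ x ≤ t})

/-- The Raney transform f^∧. -/
def raneI {L : Type*} [CompleteLattice L] (f : L → L) (x : L) : L :=
  sInf (f '' {t | ¬ t ≤ x})

/-! Both sides of the adjunction unfold to the same condition `¬ x ≤ t → f t ≤ g x` on pairs `(x, t)`. -/

section Raney

variable {L : Type*} [CompleteLattice L] {f : L → L} {x a : L}

theorem raneV_le_iff : raneV f x ≤ a ↔ ∀ t, ¬ x ≤ t → f t ≤ a := by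
  simp only [raneV, sSup_le_iff, Set.forall_mem_image, Set.mem_ofPred_eq]

theorem le_raneI_iff : a ≤ raneI f x ↔ ∀ t, ¬ t ≤ x → a ≤ f t := by
  simp only [raneI, le_sInf_iff, Set.forall_mem_image, Set.mem_ofPred_eq]

end Raney

theorem stmt14 {L : Type*} [CompleteLattice L] (f g : L → L) :
    (∀ x, raneV f x ≤ g x) ↔ (∀ x, f x ≤ raneI g x) := by
  simp only [raneV_le_iff, le_raneI_iff]
  exact forall_comm
end
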